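/- For every natural number k \ge 1, the number of directed paths in the action graph A_k from the (unique) vertex labeled 1 to vertices labeled k is equal to the number of directed paths in the action graph A_{k-1} from the vertex labeled 0 to vertices labeled k-1. -/

import Mathlib

/-- Vertices of action graphs: the root (labeled 0), or a vertex created at some
step, recorded together with its label and the path (head and tail of the vertex
sequence) that created it. -/
inductive AGVert : Type
  | root : AGVert
  | node (lbl : ℕ) (head : AGVert) (tail : List AGVert) : AGVert

/-- The label of a vertex. -/
def AGVert.label : AGVert → ℕ
  | .root => 0
  | .node l _ _ => l

/-- `IsPath E a l` says that `a :: l` is the vertex sequence of a directed path in a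
graph with edge set `E` (the trivial path at `a` when `l = []`). -/
def IsPath (E : Set (AGVert × AGVert)) (a : AGVert) (l : List AGVert) : Prop :=
  List.Chain (fun x y => (x, y) ∈ E) a l

/-- The terminal vertex of the path with vertex sequence `a :: l`. -/
def pathLast (a : AGVert) (l : List AGVert) : AGVert :=
  (a :: l).getLast (List.cons_ne_nil a l)

/-- The action graph `A k`, given by its set of vertices together with its set of
(nontrivial, directed) edges.  `A 0` has one vertex (labeled 0) and no nontrivial
edges; `A (k+1)` is obtained from `A k` by adjoining, for each directed path
(including trivial ones) in `A k` whose terminal vertex is labeled `k`, a new vertex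
labeled `k+1` and a new edge from the initial vertex of the path to the new vertex. -/
def actionGraph : ℕ → Set AGVert × Set (AGVert × AGVert)
  | 0 => ({AGVert.root}, ∅)
  | k + 1 =>
    let G := actionGraph k
    (G.1 ∪ { w | ∃ a l, a ∈ G.1 ∧ IsPath G.2 a l ∧ (pathLast a l).label = k ∧
        w = AGVert.node (k + 1) a l },
     G.2 ∪ { e | ∃ a l, a ∈ G.1 ∧ IsPath G.2 a l ∧ (pathLast a l).label = k ∧
        e = (a, AGVert.node (k + 1) a l) })

/-!
Shifting every label by one, i.e. sending the root to the unique vertex labeled `1` and the vertex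
created from a path `a :: t` to the vertex created from the shifted path, embeds `A (k-1)`
into `A k`. Edges go to edges, and conversely every edge of `A k` leaving a shifted vertex
is the shift of an edge of `A (k-1)`: the construction of `A k` above the vertex `1` is a
copy of the construction of `A (k-1)` above the root. Hence the paths of `A k` starting at
`1` are exactly the shifts of the paths of `A (k-1)` starting at `0`.
-/

namespace AGVert

mutual
def shift : AGVert → AGVert
  | .root => .node 1 .root []
  | .node m a t => .node (m + 1) (shift a) (shiftList t)
def shiftList : List AGVert → List AGVert
  | [] => []
  | x :: xs => shift x :: shiftList xs
end

theorem shiftList_eq_map (l : List AGVert) : shiftList l = l.map shift := by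
  induction l with
  | nil => rfl
  | cons x xs ih => simp [shiftList, ih]

theorem shift_node (m : ℕ) (a : AGVert) (t : List AGVert) :
    shift (.node m a t) = .node (m + 1) (shift a) (t.map shift) := by
  rw [shift, shiftList_eq_map]

theorem shift_ne_root (a : AGVert) : shift a ≠ .root := by
  cases a <;> simp [shift]

theorem label_shift (a : AGVert) : (shift a).label = a.label + 1 := by
  cases a <;> simp [shift, label]

mutual
theorem shift_inj : ∀ {a b : AGVert}, shift a = shift b → a = b
  | .root, .root, _ => rfl
  | .root, .node _ b _, h => by
      simp only [shift, node.injEq] at h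
      exact absurd h.2.1.symm (shift_ne_root b)
  | .node _ a _, .root, h => by
      simp only [shift, node.injEq] at h
      exact absurd h.2.1 (shift_ne_root a)
  | .node _ _ _, .node _ _ _, h => by
      simp only [shift, node.injEq, Nat.add_right_cancel_iff] at h
      obtain ⟨rfl, ha, ht⟩ := h
      rw [shift_inj ha, shiftList_inj ht]
theorem shiftList_inj : ∀ {l m : List AGVert}, shiftList l = shiftList m → l = m
  | [], [], _ => rfl
  | [], _ :: _, h | _ :: _, [], h => by simp [shiftList] at h
  | _ :: _, _ :: _, h => by
      simp only [shiftList, List.cons.injEq] at h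
      rw [shift_inj h.1, shiftList_inj h.2]
end

theorem shift_injective : Function.Injective shift := fun _ _ => shift_inj

end AGVert

open AGVert

theorem pathLast_cons (a b : AGVert) (l : List AGVert) :
    pathLast a (b :: l) = pathLast b l := by
  simp [pathLast, List.getLast]

theorem pathLast_map (f : AGVert → AGVert) (a : AGVert) (l : List AGVert) :
    pathLast (f a) (l.map f) = f (pathLast a l) := by
  induction l generalizing a with
  | nil => rfl
  | cons b t ih => simp only [List.map_cons, pathLast_cons, ih]

section Paths

variable {E E' : Set (AGVert × AGVert)} {f : AGVert → AGVert}

theorem isPath_iff {a : AGVert} {l : List AGVert} :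
    IsPath E a l ↔ List.IsChain (fun x y => (x, y) ∈ E) (a :: l) := Iff.rfl

theorem isPath_cons_iff {a b : AGVert} {l : List AGVert} :
    IsPath E a (b :: l) ↔ (a, b) ∈ E ∧ IsPath E b l := List.isChain_cons_cons

theorem IsPath.map (hf : ∀ x y, (x, y) ∈ E → (f x, f y) ∈ E') {a : AGVert} {l : List AGVert}
    (h : IsPath E a l) : IsPath E' (f a) (l.map f) := by
  rw [isPath_iff, ← List.map_cons, List.isChain_map]
  exact List.IsChain.imp (fun x y hxy => hf x y hxy) h

theorem IsPath.exists_eq_map {V : Set AGVert}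
    (hf : ∀ x ∈ V, ∀ y, (f x, y) ∈ E' → ∃ y' ∈ V, y = f y' ∧ (x, y') ∈ E) :
    ∀ {L : List AGVert} {x : AGVert}, x ∈ V → IsPath E' (f x) L →
      ∃ l, L = l.map f ∧ IsPath E x l
  | [], _, _, _ => ⟨[], rfl, List.isChain_singleton _⟩
  | y :: L, x, hx, hp => by
      rw [isPath_cons_iff] at hp
      obtain ⟨y', hy', rfl, hxy'⟩ := hf x hx y hp.1
      obtain ⟨l, rfl, hl⟩ := IsPath.exists_eq_map hf hy' hp.2
      exact ⟨y' :: l, rfl, isPath_cons_iff.2 ⟨hxy', hl⟩⟩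

end Paths

theorem root_mem_actionGraph (k : ℕ) : root ∈ (actionGraph k).1 := by
  induction k with
  | zero => rfl
  | succ k ih => exact Or.inl ih

theorem label_le_of_mem_actionGraph {k : ℕ} {w : AGVert} (hw : w ∈ (actionGraph k).1) :
    w.label ≤ k := by
  induction k with
  | zero => rw [Set.mem_singleton_iff.1 hw]; rfl
  | succ k ih =>
      rcases hw with hw | ⟨a, l, -, -, -, rfl⟩
      · exact (ih hw).trans k.le_succ
      · rfl

theorem label_lt_of_mem_actionGraph_snd {k : ℕ} {u v : AGVert}
    (h : (u, v) ∈ (actionGraph k).2) : u.label < v.label ∧ v.label ≤ k := by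
  induction k with
  | zero => exact absurd h (Set.notMem_empty _)
  | succ k ih =>
      rcases h with h | ⟨a, l, ha, -, -, he⟩
      · exact (ih h).imp_right (·.trans k.le_succ)
      · obtain ⟨rfl, rfl⟩ := Prod.mk.inj he
        exact ⟨Nat.lt_succ_of_le (label_le_of_mem_actionGraph ha), le_rfl⟩

theorem eq_shift_root_of_label_eq_one {k : ℕ} {w : AGVert} (hw : w ∈ (actionGraph k).1)
    (h1 : w.label = 1) : w = shift root := by
  induction k with
  | zero => rw [Set.mem_singleton_iff.1 hw] at h1; exact absurd h1 zero_ne_one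
  | succ k ih =>
      rcases hw with hw | ⟨a, l, ha, hp, -, rfl⟩
      · exact ih hw
      · obtain rfl : k = 0 := by simpa [label] using h1
        obtain rfl := Set.mem_singleton_iff.1 ha
        cases l with
        | nil => rfl
        | cons x xs => exact absurd (isPath_cons_iff.1 hp).1 (Set.notMem_empty _)

theorem shift_mem_actionGraph_and_edges (k : ℕ) :
    (∀ x ∈ (actionGraph k).1, shift x ∈ (actionGraph (k + 1)).1) ∧
    ∀ x y, (x, y) ∈ (actionGraph k).2 → (shift x, shift y) ∈ (actionGraph (k + 1)).2 := by
  induction k with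
  | zero =>
      refine ⟨fun x hx => ?_, fun x y h => absurd h (Set.notMem_empty _)⟩
      obtain rfl := Set.mem_singleton_iff.1 hx
      exact Or.inr ⟨root, [], rfl, List.isChain_singleton _, rfl, rfl⟩
  | succ k ih =>
      obtain ⟨hmem, hedge⟩ := ih
      have hshift_creator : ∀ {a l}, a ∈ (actionGraph k).1 → IsPath (actionGraph k).2 a l →
          (pathLast a l).label = k → shift a ∈ (actionGraph (k + 1)).1 ∧
            IsPath (actionGraph (k + 1)).2 (shift a) (l.map shift) ∧
            (pathLast (shift a) (l.map shift)).label = k + 1 := fun ha hp hl =>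
        ⟨hmem _ ha, hp.map hedge, by rw [pathLast_map, label_shift, hl]⟩
      constructor
      · rintro x (hx | ⟨a, l, ha, hp, hl, rfl⟩)
        · exact Or.inl (hmem x hx)
        · obtain ⟨ha', hp', hl'⟩ := hshift_creator ha hp hl
          exact Or.inr ⟨_, _, ha', hp', hl', shift_node _ _ _⟩
      · rintro x y (h | ⟨a, l, ha, hp, hl, he⟩)
        · exact Or.inl (hedge x y h)
        · obtain ⟨rfl, rfl⟩ := Prod.mk.inj he
          obtain ⟨ha', hp', hl'⟩ := hshift_creator ha hp hl
          exact Or.inr ⟨_, _, ha', hp', hl', by rw [shift_node]⟩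

theorem exists_eq_shift_of_mem_actionGraph_snd (k : ℕ) :
    ∀ x ∈ (actionGraph k).1, ∀ y, (shift x, y) ∈ (actionGraph (k + 1)).2 →
      ∃ y' ∈ (actionGraph k).1, y = shift y' ∧ (x, y') ∈ (actionGraph k).2 := by
  induction k with
  | zero =>
      rintro x - y (h | ⟨a, l, ha, -, -, he⟩)
      · exact absurd h (Set.notMem_empty _)
      · obtain rfl := Set.mem_singleton_iff.1 ha
        exact absurd (Prod.mk.inj he).1 (shift_ne_root x)
  | succ k ih =>
      intro x hx y h
      -- the new vertices of `A (k + 1)` have label `k + 1`, so their shifts have no outgoing edge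
      have hxk : x ∈ (actionGraph k).1 := by
        have hlt := (label_lt_of_mem_actionGraph_snd h)
        rcases hx with hx | ⟨a, l, -, -, -, rfl⟩
        · exact hx
        · rw [label_shift] at hlt
          simp only [label] at hlt
          omega
      rcases h with h | ⟨a, l, -, hp, hl, he⟩
      · obtain ⟨y', hy', rfl, hxy'⟩ := ih x hxk y h
        exact ⟨y', Or.inl hy', rfl, Or.inl hxy'⟩
      · obtain ⟨rfl, rfl⟩ := Prod.mk.inj he
        obtain ⟨l', rfl, hl'⟩ := IsPath.exists_eq_map ih hxk hp
        rw [pathLast_map, label_shift, Nat.add_right_cancel_iff] at hl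
        exact ⟨.node (k + 1) x l', Or.inr ⟨x, l', hxk, hl', hl, rfl⟩, (shift_node _ _ _).symm,
          Or.inr ⟨x, l', hxk, hl', hl, rfl⟩⟩

theorem paths_from_one_eq_image_shift (k : ℕ) :
    {p : AGVert × List AGVert | p.1 ∈ (actionGraph (k + 1)).1 ∧
        IsPath (actionGraph (k + 1)).2 p.1 p.2 ∧ p.1.label = 1 ∧
        (pathLast p.1 p.2).label = k + 1} =
      Prod.map shift (List.map shift) '' {p : AGVert × List AGVert | p.1 ∈ (actionGraph k).1 ∧
        IsPath (actionGraph k).2 p.1 p.2 ∧ p.1.label = 0 ∧ (pathLast p.1 p.2).label = k} := by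
  obtain ⟨hmem, hedge⟩ := shift_mem_actionGraph_and_edges k
  ext ⟨a, L⟩
  constructor
  · rintro ⟨ha, hp, ha1, hL⟩
    obtain rfl := eq_shift_root_of_label_eq_one ha ha1
    obtain ⟨l, rfl, hl⟩ :=
      IsPath.exists_eq_map (exists_eq_shift_of_mem_actionGraph_snd k) (root_mem_actionGraph k) hp
    rw [pathLast_map, label_shift, Nat.add_right_cancel_iff] at hL
    exact ⟨(root, l), ⟨root_mem_actionGraph k, hl, rfl, hL⟩, rfl⟩
  · rintro ⟨⟨b, l⟩, ⟨hb, hl, hb0, hlast⟩, he⟩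
    obtain ⟨rfl, rfl⟩ := Prod.mk.inj he
    exact ⟨hmem b hb, hl.map hedge, by rw [label_shift, hb0], by
      rw [pathLast_map, label_shift, hlast]⟩

/-- For `k ≥ 1`, the number of directed paths in `A k` from the vertex labeled 1 to
vertices labeled `k` equals the number of directed paths in `A (k-1)` from the vertex
labeled 0 to vertices labeled `k-1`. -/
theorem stmt_1 (k : ℕ) (hk : 1 ≤ k) :
    {p : AGVert × List AGVert | p.1 ∈ (actionGraph k).1 ∧
        IsPath (actionGraph k).2 p.1 p.2 ∧ p.1.label = 1 ∧
        (pathLast p.1 p.2).label = k}.ncard =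
      {p : AGVert × List AGVert | p.1 ∈ (actionGraph (k - 1)).1 ∧
        IsPath (actionGraph (k - 1)).2 p.1 p.2 ∧ p.1.label = 0 ∧
        (pathLast p.1 p.2).label = k - 1}.ncard := by
  obtain ⟨k, rfl⟩ := Nat.exists_eq_add_of_le' hk
  rw [Nat.add_sub_cancel, paths_from_one_eq_image_shift,
    Set.ncard_image_of_injective _ (shift_injective.prodMap (List.map_injective_iff.2 shift_injective))]
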